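/- arXiv:math/0508051 — 4 statements merged into one kernel-verified Lean document; each statement's English description precedes it below -/
import Mathlib

section
/- Let M be a smooth manifold with H₂(M,ℤ) = 0, Ψ : M → G a smooth map into a compact Lie group, ω ∈ Ω²(M) with dω = Ψ*η for a closed 3-form η on G with integral periods. Then for every smooth singular 2-cycle S in M and 3-chain B in G with ∂B = Ψ_*(S), the quantity ∫_B η − ∫_S ω is an integer. -/
/-- **Integrality of the relative cocycle `(ω, η)` when `H₂(M,ℤ) = 0`.**
Smooth singular chains are axiomatized: `C2M`, `C3M` are the groups of (smooth
singular) 2- and 3-chains of `M`, `C2G`, `C3G` those of `G`, with boundary maps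
`bM, bG` and pushforwards `Ψ2, Ψ3` along `Ψ : M → G` commuting with the boundary.
Integration of `ω ∈ Ω²(M)` and of `η ∈ Ω³(G)` gives homomorphisms `Iω`, `Iη`.
The hypothesis `dω = Ψ*η` together with Stokes' theorem is encoded as
`∫_{∂T} ω = ∫_T dω = ∫_T Ψ*η = ∫_{Ψ_* T} η` for every 3-chain `T` of `M`;
`η` has integral periods (`∫_Z η ∈ ℤ` for every 3-cycle `Z` of `G`); and
`H₂(M,ℤ) = 0` is encoded as: every 2-cycle of `M` bounds.
Conclusion: for every 2-cycle `S` of `M` and 3-chain `B` of `G` with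
`∂B = Ψ_*(S)`, the quantity `∫_B η − ∫_S ω` is an integer. -/
theorem stmt7
    {C1M C2M C3M C2G C3G : Type*}
    [AddCommGroup C1M] [AddCommGroup C2M] [AddCommGroup C3M] [AddCommGroup C2G] [AddCommGroup C3G]
    (bM : C3M →+ C2M) (b2M : C2M →+ C1M) (bG : C3G →+ C2G)
    (Ψ2 : C2M →+ C2G) (Ψ3 : C3M →+ C3G)
    (hΨ : ∀ T : C3M, bG (Ψ3 T) = Ψ2 (bM T))
    (Iω : C2M →+ ℝ) (Iη : C3G →+ ℝ)
    (hStokes : ∀ T : C3M, Iω (bM T) = Iη (Ψ3 T))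
    (hηint : ∀ Z : C3G, bG Z = 0 → ∃ m : ℤ, Iη Z = m)
    (hH2 : ∀ S : C2M, b2M S = 0 → ∃ T : C3M, bM T = S) :
    ∀ (S : C2M) (B : C3G), b2M S = 0 → bG B = Ψ2 S →
      ∃ m : ℤ, Iη B - Iω S = m := by
  intro S B hS hB
  obtain ⟨T, hT⟩ := hH2 S hS
  obtain ⟨m, hm⟩ := hηint (B - Ψ3 T) (by simp [map_sub, hB, hΨ, hT])
  exact ⟨m, by rw [← hm, map_sub]; rw [← hT, hStokes]⟩
end

section
/- Let r, k be positive integers with r ∣ k. Suppose H₂(M,ℤ) is r-torsion (i.e. r·H₂(M,ℤ) = 0), Ψ : M → G is smooth, ω ∈ Ω²(M) satisfies dω = Ψ*η, and η is a closed 3-form on G with integral periods. Then for every 2-cycle S in M and 3-chain B in G with ∂B = Ψ_*(S), one has k(∫_B η − ∫_S ω) ∈ ℤ. -/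
/-- **Level-`k` pre-quantizability when `H₂(M,ℤ)` is `r`-torsion, `r ∣ k`.**
Chains, boundaries, pushforwards and integration are axiomatized as in the
`H₂(M,ℤ) = 0` case: `bM, b2M, bG` are boundary maps, `Ψ2, Ψ3` the pushforwards
along `Ψ : M → G` (commuting with boundaries), `Iω, Iη` integration of
`ω ∈ Ω²(M)` and `η ∈ Ω³(G)`; the equation `dω = Ψ*η` and Stokes' theorem give
`∫_{∂T} ω = ∫_{Ψ_* T} η`, and `η` has integral periods.  That `H₂(M,ℤ)` is
`r`-torsion is encoded as: for every 2-cycle `S` there is a 3-chain `T` with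
`∂T = r·S`.  Conclusion: for every 2-cycle `S` in `M` and 3-chain `B` in `G` with
`∂B = Ψ_*(S)`, one has `k·(∫_B η − ∫_S ω) ∈ ℤ`. -/
theorem stmt8
    {C1M C2M C3M C2G C3G : Type*}
    [AddCommGroup C1M] [AddCommGroup C2M] [AddCommGroup C3M]
    [AddCommGroup C2G] [AddCommGroup C3G]
    (r k : ℕ) (hr : 0 < r) (hk : 0 < k) (hrk : r ∣ k)
    (bM : C3M →+ C2M) (b2M : C2M →+ C1M) (bG : C3G →+ C2G)
    (Ψ2 : C2M →+ C2G) (Ψ3 : C3M →+ C3G)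
    (hΨ : ∀ T : C3M, bG (Ψ3 T) = Ψ2 (bM T))
    (Iω : C2M →+ ℝ) (Iη : C3G →+ ℝ)
    (hStokes : ∀ T : C3M, Iω (bM T) = Iη (Ψ3 T))
    (hηint : ∀ Z : C3G, bG Z = 0 → ∃ m : ℤ, Iη Z = m)
    (hH2 : ∀ S : C2M, b2M S = 0 → ∃ T : C3M, bM T = r • S) :
    ∀ (S : C2M) (B : C3G), b2M S = 0 → bG B = Ψ2 S →
      ∃ m : ℤ, (k : ℝ) * (Iη B - Iω S) = m := by
  intro S B hS hB
  obtain ⟨T, hT⟩ := hH2 S hS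
  obtain ⟨c, hc⟩ := hrk
  have hZ : bG (r • B - Ψ3 T) = 0 := by
    simp [map_sub, map_nsmul, hB, hΨ T, hT]
  obtain ⟨m, hm⟩ := hηint _ hZ
  refine ⟨c * m, ?_⟩
  have h1 : (r : ℝ) * (Iη B - Iω S) = m := by
    have := hStokes T
    rw [hT] at this
    rw [map_sub, map_nsmul] at hm
    rw [map_nsmul] at this
    push_cast [nsmul_eq_mul] at hm this ⊢
    linarith
  have hcast : (k : ℝ) = (r : ℝ) * c := by exact_mod_cast congrArg (Nat.cast : ℕ → ℝ) hc
  rw [hcast]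
  push_cast
  rw [mul_assoc, mul_comm (c : ℝ), ← mul_assoc, h1]
  ring
end

section
/- Let G be a compact Lie group with Ad-invariant inner product B. For a conjugacy class 𝒞 ⊂ G, the formula ω_g(ξ_𝒞(g), ζ_𝒞(g)) = (1/2)·B((Ad_g − Ad_{g⁻¹})ξ, ζ) defines a well-defined skew-symmetric bilinear form on each tangent space T_g𝒞, where ξ_𝒞(g) denotes the value at g of the vector field generated by ξ ∈ 𝔤 under conjugation. -/
/-- **The 2-form on a conjugacy class is well defined and skew-symmetric.**
Let `𝒞 ⊂ G` be a conjugacy class, `g ∈ 𝒞`, and let `A = Ad_g : 𝔤 ≃ 𝔤`, which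
preserves the `Ad`-invariant symmetric bilinear form `B`.  The generating vector
field of `ξ ∈ 𝔤` for the conjugation action at `g` is, in the left trivialization,
`ξ_𝒞(g) = A.symm ξ - ξ` (equivalently determined by `A ξ − ξ`), and `T_g𝒞` consists
exactly of these vectors.  The formula
`ω_g(ξ_𝒞(g), ζ_𝒞(g)) = (1/2)·B((Ad_g − Ad_{g⁻¹})ξ, ζ)` then
(1) depends only on the tangent vectors `ξ_𝒞(g)`, `ζ_𝒞(g)` (i.e. only on
`A ξ − ξ` and `A ζ − ζ`), not on the choice of `ξ`, `ζ`, hence defines a bilinear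
form on `T_g𝒞`; and (2) is skew-symmetric. -/
theorem stmt10
    {𝔤 : Type*} [AddCommGroup 𝔤] [Module ℝ 𝔤]
    (B : 𝔤 →ₗ[ℝ] 𝔤 →ₗ[ℝ] ℝ)
    (hsym : ∀ x y : 𝔤, B x y = B y x)
    (A : 𝔤 ≃ₗ[ℝ] 𝔤)
    (hA : ∀ x y : 𝔤, B (A x) (A y) = B x y)
    (ω : 𝔤 → 𝔤 → ℝ)
    (hω : ∀ ξ ζ : 𝔤, ω ξ ζ = (1/2) * B (A ξ - A.symm ξ) ζ) :
    (∀ ξ ξ' ζ ζ' : 𝔤,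
        A ξ - ξ = A ξ' - ξ' → A ζ - ζ = A ζ' - ζ' → ω ξ ζ = ω ξ' ζ')
    ∧ (∀ ξ ζ : 𝔤, ω ζ ξ = - ω ξ ζ) := by
  -- Key auxiliary identity: B (A.symm x) y = B x (A y).
  have hA' : ∀ x y : 𝔤, B (A.symm x) y = B x (A y) := by
    intro x y
    have := hA (A.symm x) y
    rw [A.apply_symm_apply] at this
    exact this.symm
  -- If A δ = δ then A.symm δ = δ.
  have hfix : ∀ δ : 𝔤, A δ - δ = 0 → A.symm δ = δ := by
    intro δ h
    have : A δ = δ := by linear_combination (norm := abel) h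
    rw [← this, A.symm_apply_apply]; exact this.symm
  constructor
  · intro ξ ξ' ζ ζ' h1 h2
    have hδ : A (ξ - ξ') - (ξ - ξ') = 0 := by
      simp only [map_sub]
      linear_combination (norm := abel) h1
    have hε : A (ζ - ζ') - (ζ - ζ') = 0 := by
      simp only [map_sub]
      linear_combination (norm := abel) h2
    have hδfix : A (ξ - ξ') = ξ - ξ' := by linear_combination (norm := abel) hδ
    have hδfix' : A.symm (ξ - ξ') = ξ - ξ' := hfix _ hδ
    have hεfix : A (ζ - ζ') = ζ - ζ' := by linear_combination (norm := abel) hε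
    have hεfix' : A.symm (ζ - ζ') = ζ - ζ' := hfix _ hε
    rw [hω, hω]
    congr 1
    -- B (A ξ - A.symm ξ) ζ = B (A ξ' - A.symm ξ') ζ'
    have e1 : B (A (ξ - ξ') - A.symm (ξ - ξ')) ζ = 0 := by
      rw [hδfix, hδfix']; simp
    have e2 : B (A ξ' - A.symm ξ') (ζ - ζ') = 0 := by
      have h3 : B (A ξ') (ζ - ζ') = B ξ' (ζ - ζ') := by
        conv_lhs => rw [← hεfix, hA]
      have h4 : B (A.symm ξ') (ζ - ζ') = B ξ' (ζ - ζ') := by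
        rw [hA', hεfix]
      simp only [map_sub, LinearMap.sub_apply] at h3 h4 ⊢
      linarith
    simp only [map_sub, LinearMap.sub_apply] at e1 e2 ⊢
    linarith
  · intro ξ ζ
    rw [hω, hω]
    have h1 : B (A ζ) ξ = B ζ (A.symm ξ) := by
      have := hA ζ (A.symm ξ)
      rwa [A.apply_symm_apply] at this
    have h2 : B (A.symm ζ) ξ = B ζ (A ξ) := by
      rw [hA', hsym]
    simp only [map_sub, LinearMap.sub_apply] at *
    rw [h1, h2, hsym (A ξ) ζ, hsym (A.symm ξ) ζ]
    ring
end

section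
/- Let G be a compact Lie group with Ad-invariant inner product B. The kernel of the bilinear form ω_g(ξ_𝒞(g), ζ_𝒞(g)) = (1/2)B((Ad_g − Ad_{g⁻¹})ξ, ζ) on T_g𝒞 consists precisely of the vectors ξ_𝒞(g) with (Ad_g + 1)ξ = 0 (for ξ in the orthogonal complement of the centralizer Lie algebra of g). -/
open scoped RealInnerProductSpace

/-- **Minimal degeneracy for conjugacy classes.**
Let `𝒞` be the conjugacy class of `g` in a compact Lie group `G` with
`Ad`-invariant inner product `B` on `𝔤`, and let `A = Ad_g`, an isometry of `𝔤`.
The tangent space `T_g𝒞 ≅ 𝔤/𝔤_g` with `𝔤_g = ker(A − 1)`, and generating vectors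
`ξ_𝒞(g)` may be represented by `ξ` in the orthogonal complement of `𝔤_g`.
The kernel of the 2-form `ω_g(ξ_𝒞(g), ζ_𝒞(g)) = (1/2)·B((Ad_g − Ad_{g⁻¹})ξ, ζ)`
consists precisely of the vectors `ξ_𝒞(g)` with `(Ad_g + 1)ξ = 0`:
for `ξ ⊥ ker(A − 1)`, one has `ω_g(ξ_𝒞(g), ·) = 0` iff `A ξ + ξ = 0`. -/
theorem stmt11
    {𝔤 : Type*} [NormedAddCommGroup 𝔤] [InnerProductSpace ℝ 𝔤]
    (A : 𝔤 ≃ₗᵢ[ℝ] 𝔤) (ξ : 𝔤)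
    (hperp : ∀ y : 𝔤, A y = y → ⟪ξ, y⟫ = 0) :
    (∀ ζ : 𝔤, (1/2) * ⟪A ξ - A.symm ξ, ζ⟫ = 0) ↔ A ξ + ξ = 0 := by
  constructor
  · intro h
    have hz : A ξ - A.symm ξ = 0 := by
      have := h (A ξ - A.symm ξ)
      have h2 : ⟪A ξ - A.symm ξ, A ξ - A.symm ξ⟫ = 0 := by linarith
      exact inner_self_eq_zero.mp h2
    have hAA : A (A ξ) = ξ := by
      have : A ξ = A.symm ξ := by
        have := sub_eq_zero.mp hz; exact this
      rw [this, A.apply_symm_apply]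
    -- u := ξ + A ξ is fixed by A
    set u := ξ + A ξ with hu
    have hfix : A u = u := by
      simp [hu, map_add, hAA, add_comm]
    have h1 : ⟪ξ, u⟫ = 0 := hperp u hfix
    have h2 : ⟪A ξ, u⟫ = 0 := by
      calc ⟪A ξ, u⟫ = ⟪A ξ, A u⟫ := by rw [hfix]
        _ = ⟪ξ, u⟫ := A.inner_map_map ξ u
        _ = 0 := h1
    have : ⟪u, u⟫ = 0 := by
      rw [hu, inner_add_left, ← hu, h1, h2]; ring
    have hu0 : u = 0 := inner_self_eq_zero.mp this
    rw [hu] at hu0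
    rw [add_comm]
    exact hu0
  · intro h ζ
    have hA : A ξ = -ξ := by
      have := eq_neg_of_add_eq_zero_left h; exact this
    have hS : A.symm ξ = -ξ := by
      have : A (-ξ) = ξ := by rw [map_neg, hA, neg_neg]
      rw [← this, A.symm_apply_apply, map_neg, hA, neg_neg]
    rw [hA, hS, sub_neg_eq_add, neg_add_cancel, inner_zero_left]
    ring
end
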